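/- Let Λ be a nonempty compact topological space and U : Λ × Λ → ℝ symmetric and lower semicontinuous. Define the ground state energy E_g(N) = min over q ∈ Λ^N of ∑_{1≤i<j≤N} U(q_i,q_j), and the pair-specific ground state energy ε_g(N) = E_g(N)/(N(N-1)). Then for all N ≥ 2, E_g(N+1) ≥ ((N+1)/(N-1)) · E_g(N). -/

import Mathlib

/-- The total pairwise energy of a configuration of `N` points. -/
noncomputable def energy {Λ : Type*} (N : ℕ) (U : Λ → Λ → ℝ) (q : Fin N → Λ) : ℝ :=
  ∑ i : Fin N, ∑ j ∈ Finset.Ioi i, U (q i) (q j)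

/-- The ground state energy of `N` points in `Λ`. -/
noncomputable def Eg (Λ : Type*) (N : ℕ) (U : Λ → Λ → ℝ) : ℝ :=
  sInf (Set.range (energy (Λ := Λ) N U))

/-!
Deleting any one point of an `(N + 1)`-point configuration `q` leaves an `N`-point configuration,
whose energy is at least `E_g(N)`. Summing over the `N + 1` deletions counts every pair of `q`
exactly `N - 1` times, so `(N + 1) E_g(N) ≤ (N - 1) E(q)`; taking the infimum over `q` gives the
claim. Lower semicontinuity on the compact space `Λ ^ N` keeps the `N`-point energies bounded
below, so that `E_g(N)` really is a lower bound for them rather than the junk value of `sInf`.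
-/

open Finset

section Combinatorics

variable {Λ : Type*} (U : Λ → Λ → ℝ)

lemma energy_eq_sum_filter_lt {N : ℕ} (q : Fin N → Λ) :
    energy N U q = ∑ p ∈ univ.filter (fun p : Fin N × Fin N => p.1 < p.2), U (q p.1) (q p.2) := by
  rw [sum_filter, ← univ_product_univ, sum_product, energy]
  refine sum_congr rfl fun i _ => ?_
  rw [← sum_filter]
  congr 1
  ext j
  simp

lemma energy_comp_succAbove {N : ℕ} (q : Fin (N + 1) → Λ) (k : Fin (N + 1)) :
    energy N U (q ∘ k.succAbove) =
      ∑ p ∈ univ.filter (fun p : Fin (N + 1) × Fin (N + 1) => p.1 < p.2),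
        if p.1 ≠ k ∧ p.2 ≠ k then U (q p.1) (q p.2) else 0 := by
  rw [← sum_filter, filter_filter, energy_eq_sum_filter_lt]
  refine sum_nbij (Prod.map k.succAbove k.succAbove) ?_ ?_ ?_ (fun _ _ => rfl)
  · rintro ⟨i, j⟩ h
    simp_all [k.succAbove_ne, Fin.succAbove_lt_succAbove_iff]
  · exact (Fin.succAbove_right_injective.prodMap Fin.succAbove_right_injective).injOn
  · rintro ⟨i, j⟩ h
    simp only [coe_filter, mem_univ, true_and, Set.mem_ofPred_eq] at h
    obtain ⟨i, rfl⟩ := Fin.exists_succAbove_eq h.2.1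
    obtain ⟨j, rfl⟩ := Fin.exists_succAbove_eq h.2.2
    exact ⟨(i, j), by simpa [Fin.succAbove_lt_succAbove_iff] using h.1, rfl⟩

lemma card_filter_ne_ne {n : ℕ} {i j : Fin n} (hij : i ≠ j) :
    ((univ.filter fun k : Fin n => i ≠ k ∧ j ≠ k).card : ℝ) = n - 2 := by
  have hcompl : univ.filter (fun k : Fin n => i ≠ k ∧ j ≠ k) = ({i, j} : Finset (Fin n))ᶜ := by
    ext k
    simp [eq_comm]
  have htwo : 2 ≤ n := by
    simpa [card_pair hij] using card_le_univ ({i, j} : Finset (Fin n))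
  rw [hcompl, card_compl, card_pair hij, Fintype.card_fin, Nat.cast_sub htwo]
  norm_num

/-- A pair of the `N + 1` points survives exactly the deletions of the `N - 1` other points. -/
lemma sum_energy_comp_succAbove {N : ℕ} (q : Fin (N + 1) → Λ) :
    ∑ k : Fin (N + 1), energy N U (q ∘ k.succAbove) = ((N : ℝ) - 1) * energy (N + 1) U q := by
  simp_rw [energy_comp_succAbove]
  rw [sum_comm, energy_eq_sum_filter_lt, mul_sum]
  refine sum_congr rfl fun p hp => ?_
  rw [← sum_filter, sum_const, nsmul_eq_mul,
    card_filter_ne_ne (mem_filter.1 hp).2.ne]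
  push_cast
  ring

end Combinatorics

lemma bddBelow_range_energy {Λ : Type*} [TopologicalSpace Λ] [CompactSpace Λ]
    {U : Λ → Λ → ℝ} (hU : LowerSemicontinuous fun p : Λ × Λ => U p.1 p.2) (N : ℕ) :
    BddBelow (Set.range (energy N U)) := by
  have hlsc : LowerSemicontinuous (energy (Λ := Λ) N U) :=
    lowerSemicontinuous_sum fun i _ => lowerSemicontinuous_sum fun j _ =>
      hU.comp (g := fun q : Fin N → Λ => (q i, q j))
        ((continuous_apply i).prodMk (continuous_apply j))
  simpa [Set.image_univ] using
    (hlsc.lowerSemicontinuousOn Set.univ).bddBelow_of_isCompact isCompact_univ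

lemma succ_mul_Eg_le {Λ : Type*} [TopologicalSpace Λ] [CompactSpace Λ]
    {U : Λ → Λ → ℝ} (hU : LowerSemicontinuous fun p : Λ × Λ => U p.1 p.2) (N : ℕ)
    (q : Fin (N + 1) → Λ) :
    ((N : ℝ) + 1) * Eg Λ N U ≤ ((N : ℝ) - 1) * energy (N + 1) U q := by
  rw [← sum_energy_comp_succAbove]
  calc ((N : ℝ) + 1) * Eg Λ N U = ∑ _k : Fin (N + 1), Eg Λ N U := by simp
    _ ≤ ∑ k, energy N U (q ∘ k.succAbove) :=
      sum_le_sum fun k _ => csInf_le (bddBelow_range_energy hU N) (Set.mem_range_self _)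

theorem groundState_recursive_inequality_general {Λ : Type*} [TopologicalSpace Λ] [CompactSpace Λ]
    [Nonempty Λ] (U : Λ → Λ → ℝ)
    (hlsc : LowerSemicontinuous (fun p : Λ × Λ => U p.1 p.2))
    (N : ℕ) (hN : 2 ≤ N) :
    Eg Λ (N + 1) U ≥ (((N : ℝ) + 1) / ((N : ℝ) - 1)) * Eg Λ N U := by
  have hpos : (0 : ℝ) < N - 1 := by
    have : (2 : ℝ) ≤ N := by exact_mod_cast hN
    linarith
  refine le_csInf (Set.range_nonempty _) ?_
  rintro _ ⟨q, rfl⟩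
  rw [div_mul_eq_mul_div, div_le_iff₀ hpos]
  linarith [succ_mul_Eg_le hlsc N q]

/-- `E_g(N+1) ≥ ((N+1)/(N-1)) · E_g(N)` for `N ≥ 2`. -/
theorem groundState_recursive_inequality {Λ : Type*} [TopologicalSpace Λ] [CompactSpace Λ]
    [Nonempty Λ] (U : Λ → Λ → ℝ) (hsym : ∀ x y, U x y = U y x)
    (hlsc : LowerSemicontinuous (fun p : Λ × Λ => U p.1 p.2))
    (N : ℕ) (hN : 2 ≤ N) :
    Eg Λ (N + 1) U ≥ (((N : ℝ) + 1) / ((N : ℝ) - 1)) * Eg Λ N U :=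
  groundState_recursive_inequality_general U hlsc N hN
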